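/- arXiv:2006.02015 — 4 statements merged into one kernel-verified Lean document; each statement's English description precedes it below -/
import Mathlib

section
/- Let G be a vertex-critical graph with χ(G) = Δ(G). Then G contains no nonempty induced subgraph H that is d_1-choosable. -/
/-!
Suppose `H = G[s]` is `d₁`-choosable and `v ∈ s`, and let `n = Δ(G) = χ(G)`. By criticality,
`G - v`, and hence `G - s`, has an `(n - 1)`-coloring. A vertex `w ∈ s` has at most
`n - d_H(w)` neighbors outside `s`, so at least `d_H(w) - 1` of the `n - 1` colors are not
used on them. Coloring `H` from these lists extends the coloring of `G - s` to an
`(n - 1)`-coloring of `G`, contradicting `χ(G) = n`.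
-/

open SimpleGraph

/-- Maximum degree of a finite graph. -/
noncomputable def maxDeg {V : Type*} [Fintype V] (G : SimpleGraph V) : ℕ :=
  Finset.univ.sup fun v => (G.neighborSet v).ncard

/-- A graph is vertex-critical if deleting any vertex decreases the chromatic number. -/
def VertexCritical {V : Type*} (G : SimpleGraph V) : Prop :=
  ∀ v : V, (G.induce {v}ᶜ).chromaticNumber < G.chromaticNumber

/-- A graph `H` is `d₁`-choosable: for every list assignment giving each vertex `v`
a list of `d_H(v) - 1` colors, there is a proper coloring from the lists. -/
def D1Choosable {W : Type*} (H : SimpleGraph W) : Prop :=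
  ∀ L : W → Finset ℕ, (∀ v, (L v).card = (H.neighborSet v).ncard - 1) →
    ∃ φ : W → ℕ, (∀ v, φ v ∈ L v) ∧ ∀ u v, H.Adj u v → φ u ≠ φ v

theorem D1Choosable.exists_coloring_of_card_le {W : Type*} {H : SimpleGraph W}
    (hH : D1Choosable H) (L : W → Finset ℕ)
    (hL : ∀ v, (H.neighborSet v).ncard - 1 ≤ (L v).card) :
    ∃ φ : W → ℕ, (∀ v, φ v ∈ L v) ∧ ∀ u v, H.Adj u v → φ u ≠ φ v := by
  choose L' hL'L hL'card using fun v => Finset.exists_subset_card_eq (hL v)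
  obtain ⟨φ, hφL', hφ⟩ := hH L' hL'card
  exact ⟨φ, fun v => hL'L v (hφL' v), hφ⟩

namespace SimpleGraph

variable {V : Type*} {G : SimpleGraph V}

theorem colorable_sub_one_of_chromaticNumber_lt {k : ℕ} (h : G.chromaticNumber < k) :
    G.Colorable (k - 1) := by
  obtain ⟨j, hj⟩ := ENat.ne_top_iff_exists.1 (h.trans (ENat.natCast_lt_top k)).ne
  rw [← hj, Nat.cast_lt] at h
  rw [← chromaticNumber_le_iff_colorable, ← hj, Nat.cast_le]
  omega

theorem ncard_neighborSet_induce (G : SimpleGraph V) (s : Set V) (w : s) :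
    ((G.induce s).neighborSet w).ncard = (G.neighborSet w ∩ s).ncard := by
  rw [← Set.ncard_image_of_injective _ Subtype.val_injective]
  congr 1
  ext u
  simp

theorem ncard_neighborSet_le_maxDeg [Fintype V] (G : SimpleGraph V) (v : V) :
    (G.neighborSet v).ncard ≤ maxDeg G :=
  Finset.le_sup (f := fun v => (G.neighborSet v).ncard) (Finset.mem_univ v)

theorem Colorable.of_induce_compl {s : Set V} {m : ℕ} (hout : (G.induce sᶜ).Colorable m)
    (hH : D1Choosable (G.induce s)) (hfin : ∀ w ∈ s, (G.neighborSet w).Finite)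
    (hdeg : ∀ w ∈ s, (G.neighborSet w).ncard ≤ m + 1) : G.Colorable m := by
  classical
  obtain ⟨c, hc⟩ := (colorable_iff_exists_bdd_nat_coloring m).1 hout
  let g : V → ℕ := fun u => if hu : u ∈ s then 0 else c ⟨u, hu⟩
  let used (w : s) : Finset ℕ := ((hfin w w.2).sdiff (t := s)).toFinset.image g
  let L (w : s) : Finset ℕ := Finset.range m \ used w
  have hL (w : s) : ((G.induce s).neighborSet w).ncard - 1 ≤ (Finset.range m \ used w).card := by
    have hsplit := Set.ncard_inter_add_ncard_sdiff_eq_ncard (G.neighborSet w) s (hfin w w.2)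
    have hused : (used w).card ≤ (G.neighborSet w \ s).ncard :=
      Finset.card_image_le.trans (Set.ncard_eq_toFinset_card _ _).ge
    have hfree := Finset.le_card_sdiff (used w) (Finset.range m)
    rw [Finset.card_range] at hfree
    rw [ncard_neighborSet_induce]
    have hdeg_w := hdeg w w.2
    omega
  obtain ⟨φ, hφL, hφ⟩ := hH.exists_coloring_of_card_le L hL
  let f : V → ℕ := fun u => if hu : u ∈ s then φ ⟨u, hu⟩ else g u
  have hmixed {x y : V} (hxy : G.Adj x y) (hx : x ∈ s) (hy : y ∉ s) : f x ≠ f y := by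
    have hgy : g y ∈ used ⟨x, hx⟩ := Finset.mem_image_of_mem g (by simpa using ⟨hxy, hy⟩)
    have hφx := (Finset.mem_sdiff.1 (hφL ⟨x, hx⟩)).2
    simp only [f, dif_pos hx, dif_neg hy]
    exact fun h => hφx (h ▸ hgy)
  refine (colorable_iff_exists_bdd_nat_coloring m).2 ⟨Coloring.mk f fun {x y} hxy => ?_, fun u => ?_⟩
  · by_cases hx : x ∈ s <;> by_cases hy : y ∈ s
    · simpa [f, hx, hy] using hφ ⟨x, hx⟩ ⟨y, hy⟩ (by simpa using hxy)
    · exact hmixed hxy hx hy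
    · exact (hmixed hxy.symm hy hx).symm
    · simpa [f, g, hx, hy] using c.valid (v := ⟨x, hx⟩) (w := ⟨y, hy⟩) (by simpa using hxy)
  · change f u < m
    by_cases hu : u ∈ s
    · simpa [f, hu] using (Finset.mem_sdiff.1 (hφL ⟨u, hu⟩)).1
    · simpa [f, g, hu] using hc ⟨u, hu⟩

end SimpleGraph

theorem stmt4 {V : Type*} [Fintype V] (G : SimpleGraph V)
    (hcrit : VertexCritical G)
    (hchi : G.chromaticNumber = (maxDeg G : ℕ∞)) :
    ∀ s : Set V, s.Nonempty → ¬ D1Choosable (G.induce s) := by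
  rintro s ⟨v, hv⟩ hH
  have hlt : (G.induce {v}ᶜ).chromaticNumber < maxDeg G := hchi ▸ hcrit v
  have hpos : 0 < maxDeg G := by exact_mod_cast pos_of_gt hlt
  have hout : (G.induce sᶜ).Colorable (maxDeg G - 1) :=
    (colorable_sub_one_of_chromaticNumber_lt hlt).of_hom
      (induceHomOfLE G (Set.compl_subset_compl.2 (Set.singleton_subset_iff.2 hv))).toHom
  have hcol : G.Colorable (maxDeg G - 1) :=
    hout.of_induce_compl hH (fun w _ => Set.toFinite _)
      fun w _ => (ncard_neighborSet_le_maxDeg G w).trans (by omega)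
  have hle := hchi ▸ hcol.chromaticNumber_le
  norm_cast at hle
  omega
end

section
/- The complement of every odd cycle of length at least 7 contains an induced gem. -/
open SimpleGraph

/-- The gem: the join `K₁ ∨ P₄`, with apex vertex `4` and path `0 - 1 - 2 - 3`. -/
def gem : SimpleGraph (Fin 5) :=
  fromEdgeSet {s(0, 1), s(1, 2), s(2, 3), s(0, 4), s(1, 4), s(2, 4), s(3, 4)}

theorem SimpleGraph.cycleGraph_adj_iff_of_succ_lt {n : ℕ} {u v : Fin n} (hu : u.val + 1 < n)
    (hv : v.val + 1 < n) :
    (cycleGraph n).Adj u v ↔ u.val = v.val + 1 ∨ v.val = u.val + 1 := by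
  have sub_val_eq_one {a b : Fin n} (hb : b.val + 1 < n) :
      (a - b).val = 1 ↔ a.val = b.val + 1 := by
    rcases le_or_gt b a with h | h
    · rw [Fin.sub_val_of_le h]
      omega
    · rw [Fin.coe_sub_iff_lt.2 h]
      omega
  rw [cycleGraph_adj', sub_val_eq_one hv, sub_val_eq_one hu]

/-- The complement of the gem is the path `2 - 0 - 3 - 1` plus the isolated apex `4`: send the
path to `0 - 1 - 2 - 3` and the apex to `5`, which is adjacent to neither `0` nor `3` once
`7 ≤ n`. -/
def gemComplEmbeddingCycleGraph {n : ℕ} (hn : 7 ≤ n) : gemᶜ ↪g cycleGraph n where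
  toFun i := Fin.castLE hn (![1, 3, 0, 2, 5] i)
  inj' := (Fin.castLE_injective hn).comp (by decide)
  map_rel_iff' {a b} := by
    have not_last (i : Fin 5) : (Fin.castLE hn (![1, 3, 0, 2, 5] i)).val + 1 < n := by
      fin_cases i <;> simp <;> omega
    change (cycleGraph n).Adj (Fin.castLE hn _) (Fin.castLE hn _) ↔ _
    rw [cycleGraph_adj_iff_of_succ_lt (not_last a) (not_last b)]
    fin_cases a <;> fin_cases b <;> simp [gem]

theorem stmt7_general (n : ℕ) (h7 : 7 ≤ n) :
    ∃ s : Set (Fin n), Nonempty (gem ≃g ((cycleGraph n)ᶜ).induce s) := by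
  rw [← isIndContained_iff_exists_iso_induce, ← compl_isIndContained_compl, compl_compl]
  exact (gemComplEmbeddingCycleGraph h7).isIndContained

theorem stmt7 (n : ℕ) (h7 : 7 ≤ n) (hodd : Odd n) :
    ∃ s : Set (Fin n), Nonempty (gem ≃g ((cycleGraph n)ᶜ).induce s) :=
  stmt7_general n h7
end

section
/- Let H be a graph containing two disjoint pairs of nonadjacent vertices. Then K_4 ∨ H is d_1-choosable. -/
open SimpleGraph

/-- The join `K₄ ∨ H`. -/
def K4Join {W : Type*} (H : SimpleGraph W) : SimpleGraph (Fin 4 ⊕ W) where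
  Adj x y :=
    match x, y with
    | .inl a, .inl b => a ≠ b
    | .inl _, .inr _ => True
    | .inr _, .inl _ => True
    | .inr a, .inr b => H.Adj a b
  symm := by
    constructor
    rintro (a | a) (b | b) h
    · exact Ne.symm h
    · trivial
    · trivial
    · exact H.adj_symm h
  loopless := by
    constructor
    rintro (a | a) h
    · exact h rfl
    · exact H.loopless.irrefl a h

/-!
Color the vertices of `H` other than `a, b, c, d` greedily from their lists and delete the colors
used from the lists of their neighbours. What is left to color is `K₄ ∨ G`, with `G` the graph
that `H` induces on `a, b, c, d`; each vertex of `K₄` keeps at least six colors, and each of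
`a, b, c, d` at least three, and four if it has a neighbour in `G`.

A coloring of `a, b, c, d` extends greedily to `K₄` once it uses at most two colors, or three
colors not all in the list of one vertex of `K₄`. Giving a common color to `a` and `b`, to `c` and
`d`, or to a non-adjacent pair across, such a coloring exists unless the lists of `a, b, c, d`
are spread over so many colors that Hall's theorem colors all eight vertices with distinct colors.
-/

open Finset Function

section

variable {ι U V W α : Type*}

namespace SimpleGraph

def ListColorable (G : SimpleGraph V) (L : V → Finset α) : Prop :=
  ∃ φ : V → α, (∀ v, φ v ∈ L v) ∧ ∀ u v, G.Adj u v → φ u ≠ φ v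

variable {G : SimpleGraph V} {L L' : V → Finset α}

theorem ListColorable.mono (h : G.ListColorable L') (hL : ∀ v, L' v ⊆ L v) :
    G.ListColorable L :=
  let ⟨φ, hφL, hφ⟩ := h
  ⟨φ, fun v => hL v (hφL v), hφ⟩

theorem listColorable_of_injective (φ : V → α) (hφ : Injective φ) (hL : ∀ v, φ v ∈ L v) :
    G.ListColorable L :=
  ⟨φ, hL, fun _ _ h => hφ.ne (G.ne_of_adj h)⟩

theorem ListColorable.of_comap_equiv (σ : U ≃ V) (h : (G.comap σ).ListColorable (L ∘ σ)) :
    G.ListColorable L := by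
  obtain ⟨φ, hφL, hφ⟩ := h
  refine ⟨φ ∘ σ.symm, fun v => by simpa using hφL (σ.symm v), fun u v huv => ?_⟩
  exact hφ _ _ (by simpa using huv)

theorem ListColorable.of_comap {e : U → V} (he : Injective e) {L' : U → Finset α} (φ : V → α)
    (hφL : ∀ v ∉ Set.range e, φ v ∈ L v)
    (hφ : ∀ u v, u ∉ Set.range e → v ∉ Set.range e → G.Adj u v → φ u ≠ φ v)
    (hL' : ∀ u, ∀ c ∈ L' u, c ∈ L (e u) ∧ ∀ v ∉ Set.range e, G.Adj (e u) v → φ v ≠ c)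
    (h : (G.comap e).ListColorable L') : G.ListColorable L := by
  obtain ⟨ψ, hψL, hψ⟩ := h
  have hext : ∀ v ∉ Set.range e, extend e ψ φ v = φ v := fun v hv =>
    extend_apply' _ _ _ fun ⟨u, hu⟩ => hv ⟨u, hu⟩
  refine ⟨extend e ψ φ, fun v => ?_, fun u v huv => ?_⟩
  · by_cases hv : v ∈ Set.range e
    · obtain ⟨u, rfl⟩ := hv
      rw [he.extend_apply]
      exact (hL' u _ (hψL u)).1
    · rw [hext v hv]
      exact hφL v hv
  · by_cases hu : u ∈ Set.range e <;> by_cases hv : v ∈ Set.range e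
    · obtain ⟨u, rfl⟩ := hu
      obtain ⟨v, rfl⟩ := hv
      rw [he.extend_apply, he.extend_apply]
      exact hψ u v huv
    · obtain ⟨u, rfl⟩ := hu
      rw [he.extend_apply, hext v hv]
      exact ((hL' u _ (hψL u)).2 v hv huv).symm
    · obtain ⟨v, rfl⟩ := hv
      rw [he.extend_apply, hext u hu]
      exact (hL' v _ (hψL v)).2 u hu huv.symm
    · rw [hext u hu, hext v hv]
      exact hφ u v hu hv huv

theorem listColorable_of_degree_lt [Fintype V] [DecidableRel G.Adj]
    (h : ∀ v, G.degree v < #(L v)) : G.ListColorable L := by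
  classical
  have hne : ∀ v, (L v).Nonempty := fun v => card_pos.1 ((h v).trans_le' (Nat.zero_le _))
  suffices ∀ s : Finset V, ∃ φ : V → α, ∀ v ∈ s, φ v ∈ L v ∧ ∀ u ∈ s, G.Adj u v → φ u ≠ φ v by
    obtain ⟨φ, hφ⟩ := this univ
    exact ⟨φ, fun v => (hφ v (mem_univ v)).1,
      fun u v huv => (hφ v (mem_univ v)).2 u (mem_univ u) huv⟩
  intro s
  induction s using Finset.induction_on with
  | empty => exact ⟨fun v => (hne v).choose, by simp⟩
  | @insert w s hw ih =>
    obtain ⟨φ, hφ⟩ := ih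
    obtain ⟨c, hcL, hc⟩ := exists_mem_notMem_of_card_lt_card
      (s := ((G.neighborFinset w).filter (· ∈ s)).image φ) (t := L w)
      (card_image_le.trans_lt ((card_filter_le _ _).trans_lt (by simpa using h w)))
    have hcφ : ∀ u ∈ s, G.Adj u w → φ u ≠ c := fun u hu huw hcu =>
      hc (mem_image.2 ⟨u, by simp [hu, huw.symm], hcu⟩)
    refine ⟨update φ w c, fun v hv => ?_⟩
    rcases eq_or_ne v w with rfl | hvw
    · refine ⟨by simpa using hcL, fun u hu huv => ?_⟩
      have hu' : u ∈ s := (mem_insert.1 hu).resolve_left (G.ne_of_adj huv)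
      simpa [G.ne_of_adj huv] using hcφ u hu' huv
    · have hv' : v ∈ s := (mem_insert.1 hv).resolve_left hvw
      refine ⟨by simpa [hvw] using (hφ v hv').1, fun u hu huv => ?_⟩
      rcases eq_or_ne u w with rfl | huw
      · simpa [hvw] using (hcφ v hv' huv.symm).symm
      · simpa [hvw, huw] using (hφ v hv').2 u ((mem_insert.1 hu).resolve_left huw) huv

theorem card_filter_adj_le [Fintype V] [DecidableRel G.Adj] (Q : Finset V) (x : V) :
    #(Q.filter (G.Adj x)) ≤ G.degree x :=
  card_le_card fun w hw => by simpa using (mem_filter.1 hw).2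

theorem card_filter_adj_lt [Fintype V] [DecidableRel G.Adj] {Q : Finset V} {x y : V}
    (hy : y ∉ Q) (hxy : G.Adj x y) : #(Q.filter (G.Adj x)) < G.degree x :=
  card_lt_card ⟨fun w hw => by simpa using (mem_filter.1 hw).2,
    fun h => hy (mem_filter.1 (h (by simpa using hxy))).1⟩

end SimpleGraph

theorem le_card_sdiff_image_add [DecidableEq α] (L : Finset α) (s : Finset U) (f : U → α) :
    #L ≤ #(L \ s.image f) + #s := by
  have := le_card_sdiff (s.image f) L
  have := card_image_le (s := s) (f := f)
  omega

theorem exists_injective_of_card_le [Fintype ι] (R : ι → Finset α) {n : ℕ}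
    (hι : Fintype.card ι ≤ n + 1) (hR : ∀ i, n ≤ #(R i)) (j : ι) (hj : n + 1 ≤ #(R j)) :
    ∃ f : ι → α, Injective f ∧ ∀ i, f i ∈ R i := by
  classical
  refine (all_card_le_biUnion_card_iff_exists_injective R).1 fun s => ?_
  by_cases hjs : j ∈ s
  · exact (card_le_univ s).trans (hι.trans (hj.trans (card_le_card (subset_biUnion_of_mem R hjs))))
  obtain rfl | ⟨i, hi⟩ := s.eq_empty_or_nonempty
  · simp
  have hs : #s ≤ n := by
    have := card_le_card (s := s) (t := univ.erase j) fun x hx =>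
      mem_erase.2 ⟨fun h => hjs (h ▸ hx), mem_univ x⟩
    rw [card_erase_of_mem (mem_univ j), card_univ] at this
    omega
  exact hs.trans ((hR i).trans (card_le_card (subset_biUnion_of_mem R hi)))

theorem exists_mem_ne_ne {Y : Finset α} (hY : 3 ≤ #Y) (a b : α) : ∃ y ∈ Y, y ≠ a ∧ y ≠ b := by
  classical
  obtain ⟨y, hy, hyab⟩ := exists_mem_notMem_of_card_lt_card (s := {a, b}) (t := Y)
    (card_le_two.trans_lt (by omega))
  simp only [mem_insert, mem_singleton, not_or] at hyab
  exact ⟨y, hy, hyab⟩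

theorem exists_pair_not_subset [DecidableEq α] {Z Y T : Finset α} {γ : α} (hZ : 3 ≤ #Z)
    (hY : 3 ≤ #Y) (h : ¬insert γ (Z ∪ Y) ⊆ T) :
    ∃ β ∈ Z, ∃ δ ∈ Y, β ≠ γ ∧ δ ≠ γ ∧ β ≠ δ ∧ ¬{γ, β, δ} ⊆ T := by
  by_cases hγ : γ ∈ T
  · obtain ⟨x, hx, hxT⟩ := not_subset.1 h
    have hxγ : x ≠ γ := fun h => hxT (h ▸ hγ)
    rcases mem_union.1 ((mem_insert.1 hx).resolve_left hxγ) with hxZ | hxY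
    · obtain ⟨δ, hδ, hδγ, hδx⟩ := exists_mem_ne_ne hY γ x
      exact ⟨x, hxZ, δ, hδ, hxγ, hδγ, hδx.symm, fun h => hxT (h (by simp))⟩
    · obtain ⟨β, hβ, hβγ, hβx⟩ := exists_mem_ne_ne hZ γ x
      exact ⟨β, hβ, x, hxY, hβγ, hxγ, hβx, fun h => hxT (h (by simp))⟩
  · obtain ⟨β, hβ, hβγ, -⟩ := exists_mem_ne_ne hZ γ γ
    obtain ⟨δ, hδ, hδγ, hδβ⟩ := exists_mem_ne_ne hY γ β
    exact ⟨β, hβ, δ, hδ, hβγ, hδγ, hδβ.symm, fun h => hγ (h (by simp))⟩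

theorem exists_mem_notMem_of_disjoint {X Y S : Finset α} (hXY : Disjoint X Y) (hY : Y ⊆ S)
    (h : #S < #X + #Y) : ∃ x ∈ X, x ∉ S := by
  classical
  by_contra! hX
  exact h.not_ge (card_union_of_disjoint hXY ▸ card_le_card (union_subset hX hY))

theorem pair_subset_of_three_le_card (s : Finset (Fin 4)) (hs : 3 ≤ #s) :
    {0, 1} ⊆ s ∨ {2, 3} ⊆ s := by
  revert s
  decide

theorem seven_le_card_biUnion [DecidableEq α] {P : Fin 4 → Finset α}
    (hAB : Disjoint (P 0) (P 1)) (hCD : Disjoint (P 2) (P 3)) (hAB7 : 7 ≤ #(P 0) + #(P 1))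
    (hCD7 : 7 ≤ #(P 2) + #(P 3)) (s : Finset (Fin 4)) (hs : 3 ≤ #s) : 7 ≤ #(s.biUnion P) := by
  rcases pair_subset_of_three_le_card s hs with h | h
  · rw [← card_union_of_disjoint hAB] at hAB7
    exact hAB7.trans (card_le_card (union_subset (subset_biUnion_of_mem P (h (by simp)))
      (subset_biUnion_of_mem P (h (by simp)))))
  · rw [← card_union_of_disjoint hCD] at hCD7
    exact hCD7.trans (card_le_card (union_subset (subset_biUnion_of_mem P (h (by simp)))
      (subset_biUnion_of_mem P (h (by simp)))))

theorem Set.ncard_eq_ncard_preimage_inl_add [Finite U] [Finite W] (s : Set (U ⊕ W)) :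
    s.ncard = (Sum.inl ⁻¹' s).ncard + (Sum.inr ⁻¹' s).ncard := by
  conv_lhs => rw [← Set.image_preimage_inl_union_image_preimage_inr s]
  rw [Set.ncard_union_eq Set.disjoint_image_inl_image_inr (Set.toFinite _) (Set.toFinite _),
    Set.ncard_image_of_injective _ Sum.inl_injective,
    Set.ncard_image_of_injective _ Sum.inr_injective]

namespace K4Join

theorem ncard_neighborSet_inl [Finite W] (H : SimpleGraph W) (i : Fin 4) :
    ((K4Join H).neighborSet (.inl i)).ncard = Nat.card W + 3 := by
  have h1 : Sum.inl ⁻¹' (K4Join H).neighborSet (.inl i) = {i}ᶜ := Set.ext fun _ => ne_comm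
  have h2 : Sum.inr ⁻¹' (K4Join H).neighborSet (.inl i) = Set.univ :=
    Set.eq_univ_of_forall fun _ => trivial
  rw [Set.ncard_eq_ncard_preimage_inl_add, h1, h2, Set.ncard_univ, Set.ncard_compl,
    Set.ncard_singleton, Nat.card_fin]
  omega

theorem ncard_neighborSet_inr [Finite W] (H : SimpleGraph W) (w : W) :
    ((K4Join H).neighborSet (.inr w)).ncard = (H.neighborSet w).ncard + 4 := by
  have h1 : Sum.inl ⁻¹' (K4Join H).neighborSet (.inr w) = Set.univ :=
    Set.eq_univ_of_forall fun _ => trivial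
  rw [Set.ncard_eq_ncard_preimage_inl_add, h1, Set.ncard_univ, Nat.card_fin, add_comm]
  rfl

theorem comap_sumMap (G : SimpleGraph W) (f : U → W) :
    (K4Join G).comap (Sum.map id f) = K4Join (G.comap f) := by
  ext (i | x) (j | y) <;> rfl

theorem listColorable_of_comap_equiv {G : SimpleGraph W} {T : Fin 4 → Finset α}
    {P : W → Finset α} (σ : U ≃ W) (h : (K4Join (G.comap σ)).ListColorable (Sum.elim T (P ∘ σ))) :
    (K4Join G).ListColorable (Sum.elim T P) := by
  refine ListColorable.of_comap_equiv (Equiv.sumCongr (Equiv.refl _) σ) ?_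
  have : ⇑(Equiv.sumCongr (Equiv.refl (Fin 4)) σ) = Sum.map id σ := by
    ext (i | x) <;> rfl
  rwa [this, comap_sumMap, Sum.elim_comp_map]

section Completion

variable [DecidableEq α] {G : SimpleGraph W} {T : Fin 4 → Finset α} {P : W → Finset α}

theorem listColorable_of_avoid (p : W → α) (hpP : ∀ x, p x ∈ P x)
    (hp : ∀ x y, G.Adj x y → p x ≠ p y) (S : Finset α) (hpS : ∀ x, p x ∈ S)
    (h3 : ∀ i, 3 ≤ #(T i \ S)) (j : Fin 4) (h4 : 4 ≤ #(T j \ S)) :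
    (K4Join G).ListColorable (Sum.elim T P) := by
  obtain ⟨t, ht, htT⟩ := exists_injective_of_card_le _ (by simp) h3 j h4
  have htS : ∀ i x, t i ≠ p x := fun i x he => (mem_sdiff.1 (htT i)).2 (he ▸ hpS x)
  refine ⟨Sum.elim t p, by rintro (i | x) <;> simp [(mem_sdiff.1 (htT _)).1, hpP], ?_⟩
  rintro (i | x) (j | y) h <;> simp only [Sum.elim_inl, Sum.elim_inr]
  exacts [ht.ne h, htS i y, (htS j x).symm, hp x y h]

theorem listColorable_of_card_le_three (hT : ∀ i, 6 ≤ #(T i)) (p : W → α)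
    (hpP : ∀ x, p x ∈ P x) (hp : ∀ x y, G.Adj x y → p x ≠ p y) (S : Finset α)
    (hpS : ∀ x, p x ∈ S) (hS : #S ≤ 3) (j : Fin 4) (hj : ¬S ⊆ T j) :
    (K4Join G).ListColorable (Sum.elim T P) := by
  refine listColorable_of_avoid p hpP hp S hpS (fun i => ?_) j ?_
  · have := le_card_sdiff S (T i)
    have := hT i
    omega
  · have : #(S ∩ T j) < #S :=
      card_lt_card ⟨inter_subset_left, fun h => hj fun x hx => (mem_inter.1 (h hx)).2⟩
    have := hT j
    rw [card_sdiff]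
    omega

theorem listColorable_of_card_le_two (hT : ∀ i, 6 ≤ #(T i)) (p : W → α) (hpP : ∀ x, p x ∈ P x)
    (hp : ∀ x y, G.Adj x y → p x ≠ p y) (S : Finset α) (hpS : ∀ x, p x ∈ S) (hS : #S ≤ 2) :
    (K4Join G).ListColorable (Sum.elim T P) := by
  have h4 : ∀ i, 4 ≤ #(T i \ S) := fun i => by
    have := le_card_sdiff S (T i)
    have := hT i
    omega
  exact listColorable_of_avoid p hpP hp S hpS (fun i => (h4 i).trans' (by norm_num)) 0 (h4 0)

end Completion

theorem listColorable_of_card_biUnion [DecidableEq α] {G : SimpleGraph (Fin 4)}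
    {T P : Fin 4 → Finset α} (hT : ∀ i, 6 ≤ #(T i)) (hP : ∀ x, 3 ≤ #(P x))
    (h7 : ∀ s : Finset (Fin 4), 3 ≤ #s → 7 ≤ #(s.biUnion P))
    (h8 : 8 ≤ #(univ.biUnion (Sum.elim T P))) : (K4Join G).ListColorable (Sum.elim T P) := by
  suffices ∀ s, #s ≤ #(s.biUnion (Sum.elim T P)) by
    obtain ⟨f, hf, hfL⟩ := (all_card_le_biUnion_card_iff_exists_injective _).1 this
    exact listColorable_of_injective f hf hfL
  intro s
  have hs := card_toLeft_add_card_toRight (u := s)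
  have hl : #s.toLeft ≤ 4 := (card_le_univ _).trans (by simp)
  have hr : #s.toRight ≤ 4 := (card_le_univ _).trans (by simp)
  have hsub : ∀ v ∈ s, #(Sum.elim T P v) ≤ #(s.biUnion (Sum.elim T P)) :=
    fun v hv => card_le_card (subset_biUnion_of_mem _ hv)
  by_cases hs8 : #s = 8
  · rwa [eq_univ_of_card s (by simpa using hs8)]
  by_cases hr3 : 3 ≤ #s.toRight
  · refine (h7 _ hr3).trans' (by omega) |>.trans (card_le_card ?_)
    exact biUnion_subset.2 fun x hx => subset_biUnion_of_mem (Sum.elim T P) (mem_toRight.1 hx)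
  by_cases hs3 : #s ≤ 3
  · obtain rfl | ⟨v, hv⟩ := s.eq_empty_or_nonempty
    · simp
    · refine hs3.trans ((?_ : 3 ≤ _).trans (hsub v hv))
      rcases v with i | x
      exacts [(hT i).trans' (by norm_num), hP x]
  · obtain ⟨i, hi⟩ := card_pos.1 (show 0 < #s.toLeft by omega)
    exact (hsub _ (mem_toLeft.1 hi)).trans' ((hT i).trans' (by omega))

/-- Lists `T` on `K₄` and `P` on `G` in `K₄ ∨ G`; the vertices `0, 1, 2, 3` of `G` play the roles
of `a, b, c, d`. -/
structure Admissible (G : SimpleGraph (Fin 4)) (T P : Fin 4 → Finset α) : Prop where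
  not_adj_zero_one : ¬G.Adj 0 1
  not_adj_two_three : ¬G.Adj 2 3
  card_left : ∀ i, #(T i) = 6
  three_le_card : ∀ x, 3 ≤ #(P x)
  four_le_card_of_adj : ∀ x y, G.Adj x y → 4 ≤ #(P x)

namespace Admissible

variable {G : SimpleGraph (Fin 4)} {T P : Fin 4 → Finset α}

theorem comap (hA : Admissible G T P) (σ : Fin 4 ≃ Fin 4) (h01 : ¬G.Adj (σ 0) (σ 1))
    (h23 : ¬G.Adj (σ 2) (σ 3)) : Admissible (G.comap σ) T (P ∘ σ) :=
  ⟨h01, h23, hA.card_left, fun x => hA.three_le_card (σ x),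
    fun x y h => hA.four_le_card_of_adj (σ x) (σ y) h⟩

theorem six_le_card (hA : Admissible G T P) (i : Fin 4) : 6 ≤ #(T i) := (hA.card_left i).ge

theorem forall_adj_ne (hA : Admissible G T P) {p : Fin 4 → α} (h02 : G.Adj 0 2 → p 0 ≠ p 2)
    (h03 : G.Adj 0 3 → p 0 ≠ p 3) (h12 : G.Adj 1 2 → p 1 ≠ p 2) (h13 : G.Adj 1 3 → p 1 ≠ p 3) :
    ∀ x y, G.Adj x y → p x ≠ p y := by
  have h01 := hA.not_adj_zero_one
  have h23 := hA.not_adj_two_three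
  intro x y hxy
  fin_cases x <;> fin_cases y
  all_goals first
    | exact absurd hxy (G.loopless.irrefl _)
    | exact absurd hxy h01 | exact absurd hxy.symm h01
    | exact absurd hxy h23 | exact absurd hxy.symm h23
    | exact h02 hxy | exact (h02 hxy.symm).symm | exact h03 hxy | exact (h03 hxy.symm).symm
    | exact h12 hxy | exact (h12 hxy.symm).symm | exact h13 hxy | exact (h13 hxy.symm).symm

variable [DecidableEq α]

theorem nine_le_card_union (hA : Admissible G T P) {x y z : Fin 4} (hxy : Disjoint (P x) (P y))
    (hxz : Disjoint (P x) (P z)) (hyz : Disjoint (P y) (P z)) : 9 ≤ #(P x ∪ P y ∪ P z) := by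
  rw [card_union_of_disjoint (disjoint_union_left.2 ⟨hxz, hyz⟩), card_union_of_disjoint hxy]
  have := hA.three_le_card x
  have := hA.three_le_card y
  have := hA.three_le_card z
  omega

theorem listColorable_of_mem_inter (hA : Admissible G T P) {a : α} (ha : a ∈ P 0 ∩ P 1)
    (haCD : a ∈ P 2 ∩ P 3) (hCD : P 2 ∩ P 3 ⊆ {a}) :
    (K4Join G).ListColorable (Sum.elim T P) := by
  rw [mem_inter] at ha haCD
  by_cases hc : ∀ y, ¬G.Adj 2 y
  · obtain ⟨d, hd, hda⟩ := exists_mem_ne ((hA.three_le_card 3).trans_lt' (by norm_num)) a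
    exact listColorable_of_card_le_two hA.six_le_card ![a, a, a, d]
      (by simp [Fin.forall_fin_succ, ha, haCD, hd])
      (hA.forall_adj_ne (fun h => absurd h.symm (hc 0)) (fun _ => hda.symm)
        (fun h => absurd h.symm (hc 1)) (fun _ => hda.symm)) {a, d}
      (by simp [Fin.forall_fin_succ]) card_le_two
  by_cases hd : ∀ y, ¬G.Adj 3 y
  · obtain ⟨c, hc, hca⟩ := exists_mem_ne ((hA.three_le_card 2).trans_lt' (by norm_num)) a
    exact listColorable_of_card_le_two hA.six_le_card ![a, a, c, a]
      (by simp [Fin.forall_fin_succ, ha, haCD, hc])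
      (hA.forall_adj_ne (fun _ => hca.symm) (fun h => absurd h.symm (hd 0))
        (fun _ => hca.symm) (fun h => absurd h.symm (hd 1))) {a, c}
      (by simp [Fin.forall_fin_succ]) card_le_two
  push Not at hc hd
  obtain ⟨y, hy⟩ := hc
  obtain ⟨z, hz⟩ := hd
  have hCDT : ¬insert a (P 2 ∪ P 3) ⊆ T 0 := fun hsub => by
    have := card_le_card ((subset_insert a _).trans hsub)
    have := card_union_add_card_inter (P 2) (P 3)
    have := (card_le_card hCD).trans_eq (card_singleton a)
    have := hA.four_le_card_of_adj _ _ hy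
    have := hA.four_le_card_of_adj _ _ hz
    have := hA.card_left 0
    omega
  obtain ⟨c, hc, d, hd, hca, hda, -, hS⟩ :=
    exists_pair_not_subset (hA.three_le_card 2) (hA.three_le_card 3) hCDT
  exact listColorable_of_card_le_three hA.six_le_card ![a, a, c, d]
    (by simp [Fin.forall_fin_succ, ha, hc, hd])
    (hA.forall_adj_ne (fun _ => hca.symm) (fun _ => hda.symm) (fun _ => hca.symm)
      (fun _ => hda.symm)) {a, c, d} (by simp [Fin.forall_fin_succ]) card_le_three 0 hS

theorem listColorable_of_inter_nonempty (hA : Admissible G T P) (hAB : (P 0 ∩ P 1).Nonempty)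
    (hCD : (P 2 ∩ P 3).Nonempty) : (K4Join G).ListColorable (Sum.elim T P) := by
  by_cases h : ∃ a ∈ P 0 ∩ P 1, ∃ b ∈ P 2 ∩ P 3, a ≠ b
  · obtain ⟨a, ha, b, hb, hab⟩ := h
    rw [mem_inter] at ha hb
    exact listColorable_of_card_le_two hA.six_le_card ![a, a, b, b]
      (by simp [Fin.forall_fin_succ, ha, hb])
      (hA.forall_adj_ne (fun _ => hab) (fun _ => hab) (fun _ => hab) (fun _ => hab)) {a, b}
      (by simp [Fin.forall_fin_succ]) card_le_two
  push Not at h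
  obtain ⟨a, ha⟩ := hAB
  obtain ⟨b, hb⟩ := hCD
  exact hA.listColorable_of_mem_inter ha (h a ha b hb ▸ hb)
    fun c hc => mem_singleton.2 (h a ha c hc).symm

theorem listColorable_of_forall_not_adj (hA : Admissible G T P) (h0 : ∀ y, ¬G.Adj 0 y)
    (h1 : ∀ y, ¬G.Adj 1 y) {b : α} (hb : b ∈ P 2 ∩ P 3) (hbAB : b ∈ P 0 ∪ P 1) :
    (K4Join G).ListColorable (Sum.elim T P) := by
  have hp : ∀ p : Fin 4 → α, ∀ x y, G.Adj x y → p x ≠ p y := fun p =>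
    hA.forall_adj_ne (absurd · (h0 2)) (absurd · (h0 3)) (absurd · (h1 2)) (absurd · (h1 3))
  rw [mem_inter] at hb
  rcases mem_union.1 hbAB with hb0 | hb1
  · obtain ⟨d, hd⟩ := card_pos.1 ((hA.three_le_card 1).trans_lt' (by norm_num))
    exact listColorable_of_card_le_two hA.six_le_card ![b, d, b, b]
      (by simp [Fin.forall_fin_succ, hb, hb0, hd]) (hp _) {b, d}
      (by simp [Fin.forall_fin_succ]) card_le_two
  · obtain ⟨a, ha⟩ := card_pos.1 ((hA.three_le_card 0).trans_lt' (by norm_num))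
    exact listColorable_of_card_le_two hA.six_le_card ![a, b, b, b]
      (by simp [Fin.forall_fin_succ, hb, hb1, ha]) (hp _) {a, b}
      (by simp [Fin.forall_fin_succ]) card_le_two

theorem listColorable_of_disjoint_of_nonempty (hA : Admissible G T P)
    (hAB : Disjoint (P 0) (P 1)) (hCD : (P 2 ∩ P 3).Nonempty) :
    (K4Join G).ListColorable (Sum.elim T P) := by
  obtain ⟨b, hb⟩ := hCD
  have hA0 := hA.three_le_card 0
  have hB1 := hA.three_le_card 1
  by_cases hsub : insert b (P 0 ∪ P 1) ⊆ T 0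
  · have hcard := card_le_card hsub
    rw [hA.card_left 0] at hcard
    have hiso : ∀ x y, x = 0 ∨ x = 1 → ¬G.Adj x y := by
      rintro x y hx hxy
      have := hA.four_le_card_of_adj x y hxy
      have := (card_le_card (subset_insert b (P 0 ∪ P 1))).trans hcard
      rw [card_union_of_disjoint hAB] at this
      rcases hx with rfl | rfl <;> omega
    refine hA.listColorable_of_forall_not_adj (hiso 0 · (.inl rfl)) (hiso 1 · (.inr rfl)) hb ?_
    by_contra hbAB
    rw [card_insert_of_notMem hbAB, card_union_of_disjoint hAB] at hcard
    omega
  · rw [mem_inter] at hb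
    obtain ⟨a, ha, d, hd, hab, hdb, -, hS⟩ := exists_pair_not_subset hA0 hB1 hsub
    exact listColorable_of_card_le_three hA.six_le_card ![a, d, b, b]
      (by simp [Fin.forall_fin_succ, ha, hb, hd])
      (hA.forall_adj_ne (fun _ => hab) (fun _ => hab) (fun _ => hdb) (fun _ => hdb)) {b, a, d}
      (by simp [Fin.forall_fin_succ]) card_le_three 0 hS

theorem listColorable_of_subset (hA : Admissible G T P) (hAB : Disjoint (P 0) (P 1))
    (hCD : Disjoint (P 2) (P 3)) (h13 : G.Adj 1 3) (hB : P 1 ⊆ T 0) (hD : P 3 ⊆ T 0)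
    (hAC : P 0 ∩ P 2 ⊆ T 0) : (K4Join G).ListColorable (Sum.elim T P) := by
  have hB4 := hA.four_le_card_of_adj 1 3 h13
  have hD4 := hA.four_le_card_of_adj 3 1 h13.symm
  have hA3 := hA.three_le_card 0
  have hC3 := hA.three_le_card 2
  have hT0 := hA.card_left 0
  refine listColorable_of_card_biUnion hA.six_le_card hA.three_le_card
    (seven_le_card_biUnion hAB hCD (by omega) (by omega)) ?_
  obtain ⟨x, hx, hxT⟩ := exists_mem_notMem_of_disjoint hAB hB (by omega)
  obtain ⟨y, hy, hyT⟩ := exists_mem_notMem_of_disjoint hCD hD (by omega)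
  have hxy : x ≠ y := fun h => hxT (hAC (mem_inter.2 ⟨hx, h ▸ hy⟩))
  calc 8 = #(insert x (insert y (T 0))) := by
        rw [card_insert_of_notMem (by simp [hxy, hxT]), card_insert_of_notMem hyT, hT0]
    _ ≤ #(univ.biUnion (Sum.elim T P)) := card_le_card <|
        insert_subset (mem_biUnion.2 ⟨.inr 0, mem_univ _, hx⟩) <|
        insert_subset (mem_biUnion.2 ⟨.inr 2, mem_univ _, hy⟩) <|
        subset_biUnion_of_mem (Sum.elim T P) (mem_univ (Sum.inl 0))

theorem listColorable_of_disjoint_of_inter_nonempty (hA : Admissible G T P)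
    (hAB : Disjoint (P 0) (P 1)) (hCD : Disjoint (P 2) (P 3)) (h02 : ¬G.Adj 0 2)
    (hAC : (P 0 ∩ P 2).Nonempty) : (K4Join G).ListColorable (Sum.elim T P) := by
  by_cases h13 : ¬G.Adj 1 3 ∧ (P 1 ∩ P 3).Nonempty
  · obtain ⟨h13, b, hb⟩ := h13
    obtain ⟨a, ha⟩ := hAC
    rw [mem_inter] at ha hb
    have hab : a ≠ b := fun h => disjoint_left.1 hAB ha.1 (h ▸ hb.1)
    exact listColorable_of_card_le_two hA.six_le_card ![a, b, a, b]
      (by simp [Fin.forall_fin_succ, ha, hb])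
      (hA.forall_adj_ne (absurd · h02) (fun _ => hab) (fun _ => hab.symm) (absurd · h13)) {a, b}
      (by simp [Fin.forall_fin_succ]) card_le_two
  by_cases hsub : ∃ a ∈ P 0 ∩ P 2, ¬insert a (P 1 ∪ P 3) ⊆ T 0
  · obtain ⟨a, ha, hsub⟩ := hsub
    rw [mem_inter] at ha
    obtain ⟨b, hb, d, hd, hba, hda, hbd, hS⟩ :=
      exists_pair_not_subset (hA.three_le_card 1) (hA.three_le_card 3) hsub
    exact listColorable_of_card_le_three hA.six_le_card ![a, b, a, d]
      (by simp [Fin.forall_fin_succ, ha, hb, hd])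
      (hA.forall_adj_ne (absurd · h02) (fun _ => hda.symm) (fun _ => hba) (fun _ => hbd))
      {a, b, d} (by simp [Fin.forall_fin_succ]) card_le_three 0 hS
  push Not at hsub h13
  obtain ⟨a, ha⟩ := hAC
  have h13 : G.Adj 1 3 := by
    by_contra hn
    have ha' : a ∉ P 1 ∪ P 3 := by
      rw [mem_inter] at ha
      simp [disjoint_left.1 hAB ha.1, disjoint_left.1 hCD ha.2]
    have := card_le_card (hsub a ha)
    rw [card_insert_of_notMem ha', card_union_of_disjoint (disjoint_iff_inter_eq_empty.2 (h13 hn)),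
      hA.card_left 0] at this
    have := hA.three_le_card 1
    have := hA.three_le_card 3
    omega
  exact listColorable_of_subset hA hAB hCD h13
    (fun x hx => hsub a ha (mem_insert_of_mem (mem_union_left _ hx)))
    (fun x hx => hsub a ha (mem_insert_of_mem (mem_union_right _ hx)))
    (fun x hx => hsub x hx (mem_insert_self _ _))

theorem seven_le_card_union (hA : Admissible G T P)
    (hdisj : ∀ x y, x ≠ y → ¬G.Adj x y → Disjoint (P x) (P y)) {u u' z : Fin 4} (huu' : u ≠ u')
    (hn : ¬G.Adj u u') (hzu : z ≠ u) (hzu' : z ≠ u') : 7 ≤ #(P u ∪ P u' ∪ P z) := by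
  have hd := hdisj u u' huu' hn
  by_cases hu : ∃ y, G.Adj u y ∨ G.Adj u' y
  · refine le_trans ?_ (card_le_card subset_union_left)
    rw [card_union_of_disjoint hd]
    have := hA.three_le_card u
    have := hA.three_le_card u'
    obtain ⟨y, hy | hy⟩ := hu <;> have := hA.four_le_card_of_adj _ _ hy <;> omega
  · push Not at hu
    exact (hA.nine_le_card_union hd (hdisj u z hzu.symm (hu z).1)
      (hdisj u' z hzu'.symm (hu z).2)).trans' (by norm_num)

theorem eight_le_card_biUnion (hA : Admissible G T P)
    (hdisj : ∀ x y, x ≠ y → ¬G.Adj x y → Disjoint (P x) (P y)) : 8 ≤ #(univ.biUnion P) := by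
  have hsub : ∀ x, P x ⊆ univ.biUnion P := fun x => subset_biUnion_of_mem P (mem_univ x)
  by_cases hiso : ∃ z, ∀ y, ¬G.Adj z y
  · obtain ⟨z, hz⟩ := hiso
    obtain ⟨u, u', huu', hn, hzu, hzu'⟩ : ∃ u u', u ≠ u' ∧ ¬G.Adj u u' ∧ z ≠ u ∧ z ≠ u' := by
      fin_cases z
      exacts [⟨2, 3, by decide, hA.not_adj_two_three, by decide, by decide⟩,
        ⟨2, 3, by decide, hA.not_adj_two_three, by decide, by decide⟩,
        ⟨0, 1, by decide, hA.not_adj_zero_one, by decide, by decide⟩,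
        ⟨0, 1, by decide, hA.not_adj_zero_one, by decide, by decide⟩]
    exact (hA.nine_le_card_union (hdisj u u' huu' hn) (hdisj u z hzu.symm (hz u ·.symm))
      (hdisj u' z hzu'.symm (hz u' ·.symm))).trans' (by norm_num) |>.trans
      (card_le_card (union_subset (union_subset (hsub u) (hsub u')) (hsub z)))
  · push Not at hiso
    obtain ⟨y0, hy0⟩ := hiso 0
    obtain ⟨y1, hy1⟩ := hiso 1
    have := hA.four_le_card_of_adj _ _ hy0
    have := hA.four_le_card_of_adj _ _ hy1
    refine le_trans ?_ (card_le_card (union_subset (hsub 0) (hsub 1)))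
    rw [card_union_of_disjoint (hdisj 0 1 (by decide) hA.not_adj_zero_one)]
    omega

theorem listColorable_of_forall_disjoint (hA : Admissible G T P)
    (hdisj : ∀ x y, x ≠ y → ¬G.Adj x y → Disjoint (P x) (P y)) :
    (K4Join G).ListColorable (Sum.elim T P) := by
  refine listColorable_of_card_biUnion hA.six_le_card hA.three_le_card (fun s hs => ?_) ?_
  · have hsub : ∀ {x y z}, x ∈ s → y ∈ s → z ∈ s → P x ∪ P y ∪ P z ⊆ s.biUnion P :=
      fun hx hy hz => union_subset (union_subset (subset_biUnion_of_mem P hx)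
        (subset_biUnion_of_mem P hy)) (subset_biUnion_of_mem P hz)
    rcases pair_subset_of_three_le_card s hs with h | h
    · obtain ⟨z, hz, hz0, hz1⟩ := exists_mem_ne_ne hs 0 1
      exact (hA.seven_le_card_union hdisj (by decide) hA.not_adj_zero_one hz0 hz1).trans
        (card_le_card (hsub (h (by simp)) (h (by simp)) hz))
    · obtain ⟨z, hz, hz2, hz3⟩ := exists_mem_ne_ne hs 2 3
      exact (hA.seven_le_card_union hdisj (by decide) hA.not_adj_two_three hz2 hz3).trans
        (card_le_card (hsub (h (by simp)) (h (by simp)) hz))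
  · refine (hA.eight_le_card_biUnion hdisj).trans (card_le_card (biUnion_subset.2 fun x _ => ?_))
    exact subset_biUnion_of_mem (Sum.elim T P) (mem_univ (Sum.inr x))

theorem listColorable_of_disjoint_of_disjoint (hA : Admissible G T P)
    (hAB : Disjoint (P 0) (P 1)) (hCD : Disjoint (P 2) (P 3)) :
    (K4Join G).ListColorable (Sum.elim T P) := by
  have h01 := hA.not_adj_zero_one
  have h23 := hA.not_adj_two_three
  by_cases hx : ∃ x ∈ ({0, 1} : Finset (Fin 4)), ∃ y ∈ ({2, 3} : Finset (Fin 4)),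
      ¬G.Adj x y ∧ (P x ∩ P y).Nonempty
  · obtain ⟨x, hx, y, hy, hn, hxy⟩ := hx
    simp only [mem_insert, mem_singleton] at hx hy
    rcases hx with rfl | rfl <;> rcases hy with rfl | rfl
    · exact hA.listColorable_of_disjoint_of_inter_nonempty hAB hCD hn hxy
    · exact listColorable_of_comap_equiv (Equiv.swap (2 : Fin 4) 3)
        ((hA.comap _ h01 (h23 ·.symm)).listColorable_of_disjoint_of_inter_nonempty hAB hCD.symm
          hn hxy)
    · exact listColorable_of_comap_equiv (Equiv.swap (0 : Fin 4) 1)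
        ((hA.comap _ (h01 ·.symm) h23).listColorable_of_disjoint_of_inter_nonempty hAB.symm hCD
          hn hxy)
    · exact listColorable_of_comap_equiv ((Equiv.swap (0 : Fin 4) 1).trans (Equiv.swap 2 3))
        ((hA.comap _ (h01 ·.symm) (h23 ·.symm)).listColorable_of_disjoint_of_inter_nonempty
          hAB.symm hCD.symm hn hxy)
  push Not at hx
  simp only [mem_insert, mem_singleton, forall_eq_or_imp, forall_eq,
    ← disjoint_iff_inter_eq_empty] at hx
  obtain ⟨⟨h02, h03⟩, h12, h13⟩ := hx
  refine hA.listColorable_of_forall_disjoint fun x y hxy hn => ?_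
  fin_cases x <;> fin_cases y
  all_goals first
    | exact absurd rfl hxy
    | exact hAB | exact hAB.symm | exact hCD | exact hCD.symm
    | exact h02 hn | exact (h02 (hn ·.symm)).symm | exact h03 hn | exact (h03 (hn ·.symm)).symm
    | exact h12 hn | exact (h12 (hn ·.symm)).symm | exact h13 hn | exact (h13 (hn ·.symm)).symm

theorem listColorable (hA : Admissible G T P) : (K4Join G).ListColorable (Sum.elim T P) := by
  have hdisj : ∀ x y, ¬(P x ∩ P y).Nonempty → Disjoint (P x) (P y) := fun x y h =>
    disjoint_iff_inter_eq_empty.2 (not_nonempty_iff_eq_empty.1 h)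
  by_cases hCD : (P 2 ∩ P 3).Nonempty <;> by_cases hAB : (P 0 ∩ P 1).Nonempty
  · exact hA.listColorable_of_inter_nonempty hAB hCD
  · exact hA.listColorable_of_disjoint_of_nonempty (hdisj 0 1 hAB) hCD
  · exact listColorable_of_comap_equiv ((Equiv.swap (0 : Fin 4) 2).trans (Equiv.swap 1 3))
      ((hA.comap _ hA.not_adj_two_three hA.not_adj_zero_one).listColorable_of_disjoint_of_nonempty
        (hdisj 2 3 hCD) hAB)
  · exact hA.listColorable_of_disjoint_of_disjoint (hdisj 0 1 hAB) (hdisj 2 3 hCD)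

end Admissible

theorem listColorable_of_four_le_card {G : SimpleGraph (Fin 4)}
    (h01 : ¬G.Adj 0 1) (h23 : ¬G.Adj 2 3) {L : Fin 4 ⊕ Fin 4 → Finset α}
    (hK : ∀ i, 6 ≤ #(L (.inl i))) (hP3 : ∀ x, 3 ≤ #(L (.inr x)))
    (hP4 : ∀ x y, G.Adj x y → 4 ≤ #(L (.inr x))) : (K4Join G).ListColorable L := by
  classical
  choose T hTL hT using fun i => exists_subset_card_eq (hK i)
  refine (Admissible.listColorable (P := L ∘ .inr) ⟨h01, h23, hT, hP3, hP4⟩).mono ?_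
  rintro (i | x)
  exacts [hTL i, subset_rfl]

theorem listColorable_of_residual [Fintype W] [DecidableEq W] [DecidableEq α]
    {H : SimpleGraph W} [DecidableRel H.Adj] {v : Fin 4 → W} (hv : Injective v)
    {L : Fin 4 ⊕ W → Finset α} {f : W → α} (hfL : ∀ w, f w ∈ L (.inr w))
    (hf : ∀ w w', H.Adj w w' → f w ≠ f w')
    (h : (K4Join (H.comap v)).ListColorable
      (Sum.elim (fun i => L (.inl i) \ (univ.image v)ᶜ.image f)
        fun k => L (.inr (v k)) \ ((univ.image v)ᶜ.filter (H.Adj (v k))).image f)) :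
    (K4Join H).ListColorable L := by
  have hout : ∀ x ∉ Set.range (Sum.map id v), ∃ w ∈ (univ.image v)ᶜ, x = (.inr w : Fin 4 ⊕ W) := by
    rintro (i | w) hx
    · exact absurd ⟨.inl i, rfl⟩ hx
    · exact ⟨w, by simpa using fun k hk => hx ⟨.inr k, by simp [hk]⟩, rfl⟩
  refine ListColorable.of_comap (Sum.map_injective.2 ⟨injective_id, hv⟩) (f ∘ Sum.elim v id)
    (fun x hx => ?_) (fun x y hx hy hxy => ?_) ?_ (by rwa [comap_sumMap])
  · obtain ⟨w, -, rfl⟩ := hout x hx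
    exact hfL w
  · obtain ⟨w, -, rfl⟩ := hout x hx
    obtain ⟨w', -, rfl⟩ := hout y hy
    exact hf w w' hxy
  · rintro (i | k) c hc
    · refine ⟨(mem_sdiff.1 hc).1, fun x hx _ he => (mem_sdiff.1 hc).2 ?_⟩
      obtain ⟨w, hw, rfl⟩ := hout x hx
      exact he ▸ mem_image_of_mem f hw
    · refine ⟨(mem_sdiff.1 hc).1, fun x hx hadj he => (mem_sdiff.1 hc).2 ?_⟩
      obtain ⟨w, hw, rfl⟩ := hout x hx
      exact he ▸ mem_image_of_mem f (mem_filter.2 ⟨hw, hadj⟩)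

theorem listColorable_of_not_adj [Fintype W] {H : SimpleGraph W} [DecidableRel H.Adj]
    (v : Fin 4 → W) (hv : Injective v) (h01 : ¬H.Adj (v 0) (v 1)) (h23 : ¬H.Adj (v 2) (v 3))
    {L : Fin 4 ⊕ W → Finset α}
    (hK : ∀ i, Fintype.card W + 2 ≤ #(L (.inl i))) (hW : ∀ w, H.degree w + 3 ≤ #(L (.inr w))) :
    (K4Join H).ListColorable L := by
  classical
  obtain ⟨f, hfL, hf⟩ := listColorable_of_degree_lt (G := H) (L := L ∘ .inr)
    fun w => (hW w).trans_lt' (by omega)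
  have hQ : #(univ.image v)ᶜ + 4 = Fintype.card W := by
    have : 4 ≤ Fintype.card W := by simpa using Fintype.card_le_of_injective v hv
    rw [card_compl, card_image_of_injective _ hv, card_fin]
    omega
  refine listColorable_of_residual hv hfL hf (listColorable_of_four_le_card h01 h23
    (fun i => ?_) (fun k => ?_) (fun k j hkj => ?_)) <;> simp only [Sum.elim_inl, Sum.elim_inr]
  · have := le_card_sdiff_image_add (L (.inl i)) (univ.image v)ᶜ f
    have := hK i
    omega
  · have := le_card_sdiff_image_add (L (.inr (v k))) ((univ.image v)ᶜ.filter (H.Adj (v k))) f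
    have := H.card_filter_adj_le (univ.image v)ᶜ (v k)
    have := hW (v k)
    omega
  · have := le_card_sdiff_image_add (L (.inr (v k))) ((univ.image v)ᶜ.filter (H.Adj (v k))) f
    have := H.card_filter_adj_lt (Q := (univ.image v)ᶜ) (by simp) hkj
    have := hW (v k)
    omega

end K4Join

end

theorem stmt12 {W : Type*} [Fintype W] (H : SimpleGraph W)
    (a b c d : W) (hab : a ≠ b) (hcd : c ≠ d)
    (hdisj : ({a, b} : Set W) ∩ {c, d} = ∅)
    (hnab : ¬ H.Adj a b) (hncd : ¬ H.Adj c d) :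
    D1Choosable (K4Join H) := by
  classical
  have hc : c ≠ a ∧ c ≠ b := by simpa using Set.eq_empty_iff_forall_notMem.1 hdisj c
  have hd : d ≠ a ∧ d ≠ b := by simpa using Set.eq_empty_iff_forall_notMem.1 hdisj d
  have hv : Injective ![a, b, c, d] := by
    intro i j h
    fin_cases i <;> fin_cases j <;> simp_all [eq_comm]
  intro L hL
  refine K4Join.listColorable_of_not_adj ![a, b, c, d] hv hnab hncd (fun i => ?_) (fun w => ?_)
  · rw [hL, K4Join.ncard_neighborSet_inl, Nat.card_eq_fintype_card]
    omega
  · rw [hL, K4Join.ncard_neighborSet_inr, ← Nat.card_coe_set_eq, Nat.card_eq_fintype_card,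
      card_neighborSet_eq_degree]
    omega
end

section
/- Let G be a clique expansion of C_5 with parts Q_1,...,Q_5 (in cyclic order). If Δ(G) = 9, χ(G) = 9, ω(G) ≤ 8, and G is vertex-critical, then a contradiction follows; equivalently, no clique expansion of C_5 with Δ = 9 and ω ≤ 8 has chromatic number 9. -/
/-!
A vertex of `Q i` has degree `|Q (i-1)| + |Q i| + |Q (i+1)| - 1 ≤ 9`; summing over `i` gives
`∑ |Q i| ≤ 16`, while `ω ≤ 8` gives `|Q i| + |Q (i+1)| ≤ 8`. Enlarge the sizes until their sum
is exactly `16`, keeping consecutive sums at most `8`: otherwise every index lies on a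
consecutive pair with sum `8`, and two disjoint such pairs already sum to `16`. Now lay the
parts one after the other around the eight colours `ZMod 8`. They wind around exactly twice, so
each part receives an arc, and any two consecutive parts (`Q 4, Q 0` included) receive disjoint
arcs. Hence `χ ≤ 8`.
-/

open SimpleGraph

/-- `G` is a clique expansion of `C₅` with parts `Q_i = f⁻¹(i)`: each part is
nonempty, and two distinct vertices are adjacent iff they lie in the same part or
in consecutive parts (cyclically).  Each part is then automatically a clique. -/
def IsCliqueExpC5 {V : Type*} (G : SimpleGraph V) (f : V → Fin 5) : Prop :=
  (∀ i, ∃ v, f v = i) ∧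
    ∀ u v, G.Adj u v ↔ u ≠ v ∧ (f u = f v ∨ (cycleGraph 5).Adj (f u) (f v))

open Finset

theorem nonempty_coloring_of_fiber_card_le {V W α : Type*} [Fintype V] [DecidableEq W]
    {G : SimpleGraph V} {H : SimpleGraph W} (f : V → W)
    (hf : ∀ u v, G.Adj u v → f u = f v ∨ H.Adj (f u) (f v)) (S : W → Finset α)
    (hS : ∀ w, #{v | f v = w} ≤ #(S w))
    (hdisj : ∀ w w', H.Adj w w' → Disjoint (S w) (S w')) :
    Nonempty (G.Coloring α) := by
  have e : ∀ w, {v // f v = w} ↪ S w := fun w => Classical.choice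
    (Function.Embedding.nonempty_of_card_le (by simpa [Fintype.card_subtype] using hS w))
  have he : ∀ u w (h : f u = w), (e (f u) ⟨u, rfl⟩ : α) = e w ⟨u, h⟩ := by
    rintro u w rfl
    rfl
  refine ⟨Coloring.mk (fun v => e (f v) ⟨v, rfl⟩) fun {u v} huv heq => ?_⟩
  rcases hf u v huv with h | h
  · rw [he u (f v) h] at heq
    exact G.ne_of_adj huv (congrArg Subtype.val ((e (f v)).injective (Subtype.ext heq)))
  · exact disjoint_left.1 (hdisj _ _ h) (e (f u) ⟨u, rfl⟩).2 (heq ▸ (e (f v) ⟨v, rfl⟩).2)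

lemma card_filter_mem_eq_sum_card_fiber {V W : Type*} [Fintype V] [DecidableEq W] (f : V → W)
    (t : Finset W) : #{v | f v ∈ t} = ∑ w ∈ t, #{v | f v = w} := by
  refine (card_eq_sum_card_fiberwise fun v hv => (mem_filter.1 hv).2).trans
    (sum_congr rfl fun w hw => congrArg card ?_)
  ext v
  simp only [mem_filter, mem_univ, true_and, and_iff_right_iff_imp]
  rintro rfl
  exact hw

namespace ZMod

def arc {k : ℕ} (p : ZMod k) (n : ℕ) : Finset (ZMod k) :=
  (range n).image fun r : ℕ => p + (r : ZMod k)

lemma natCast_injOn_Iio (k : ℕ) : Set.InjOn (Nat.cast : ℕ → ZMod k) (Set.Iio k) :=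
  fun r hr s hs h => ((natCast_eq_natCast_iff r s k).1 h).eq_of_lt_of_lt hr hs

lemma card_arc {k n : ℕ} (p : ZMod k) (hn : n ≤ k) : #(arc p n) = n := by
  rw [arc, card_image_of_injOn, card_range]
  intro r hr s hs h
  exact natCast_injOn_Iio k (mem_range.1 hr |>.trans_le hn) (mem_range.1 hs |>.trans_le hn)
    (add_left_cancel h)

lemma disjoint_arc_arc_add {k m n : ℕ} (p : ZMod k) (hmn : m + n ≤ k) :
    Disjoint (arc p m) (arc (p + m) n) := by
  simp only [arc, Finset.disjoint_left, mem_image, mem_range, not_exists, not_and]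
  rintro _ ⟨r, hr, rfl⟩ s hs h
  have : m + s = r := natCast_injOn_Iio k (show m + s < k by omega) (show r < k by omega)
    (by push_cast; exact add_left_cancel ((add_assoc _ _ _).symm.trans h))
  omega

end ZMod

lemma exists_pred_add_lt_and_add_succ_lt {k : ℕ} (a : Fin 5 → ℕ)
    (hpair : ∀ i, a i + a (i + 1) ≤ k) (hsum : ∑ i, a i < 2 * k) :
    ∃ i, a (i - 1) + a i < k ∧ a i + a (i + 1) < k := by
  by_contra! h
  have h0 : a 4 + a 0 < k → k ≤ a 0 + a 1 := h 0
  have h1 : a 0 + a 1 < k → k ≤ a 1 + a 2 := h 1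
  have h2 : a 1 + a 2 < k → k ≤ a 2 + a 3 := h 2
  have h3 : a 2 + a 3 < k → k ≤ a 3 + a 4 := h 3
  have h4 : a 3 + a 4 < k → k ≤ a 4 + a 0 := h 4
  have := hpair 0; have := hpair 1; have := hpair 2; have := hpair 3
  have : a 4 + a 0 ≤ k := hpair 4
  rw [Fin.sum_univ_five] at hsum
  omega

lemma exists_le_sum_eq_two_mul {k : ℕ} (a : Fin 5 → ℕ) (hpair : ∀ i, a i + a (i + 1) ≤ k)
    (hsum : ∑ i, a i ≤ 2 * k) :
    ∃ b : Fin 5 → ℕ, a ≤ b ∧ (∀ i, b i + b (i + 1) ≤ k) ∧ ∑ i, b i = 2 * k := by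
  obtain ⟨d, hd⟩ := Nat.exists_eq_add_of_le hsum
  clear hsum
  induction d generalizing a with
  | zero => exact ⟨a, le_rfl, hpair, hd.symm⟩
  | succ d ih =>
    obtain ⟨i, hprev, hnext⟩ := exists_pred_add_lt_and_add_succ_lt a hpair (by omega)
    have hsucc : ∀ j : Fin 5, j + 1 ≠ j := by decide
    obtain ⟨b, hab, hb⟩ := ih (a + Pi.single i 1) (fun j => by
      simp only [Pi.add_apply, Pi.single_apply]
      split_ifs with hj hj' hj'
      · exact absurd (hj'.trans hj.symm) (hsucc j)
      · subst hj; omega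
      · rw [hj', eq_sub_of_add_eq hj']
        omega
      · simpa using hpair j)
      (by simp only [Pi.add_apply, sum_add_distrib, sum_pi_single', mem_univ, if_true]; omega)
    exact ⟨b, fun j => (Nat.le_add_right (a j) _).trans (hab j), hb⟩

lemma exists_adj_disjoint_zmod_finsets {k : ℕ} (a : Fin 5 → ℕ)
    (hpair : ∀ i, a i + a (i + 1) ≤ k) (hsum : ∑ i, a i ≤ 2 * k) :
    ∃ S : Fin 5 → Finset (ZMod k), (∀ i, a i ≤ #(S i)) ∧
      ∀ i j, (cycleGraph 5).Adj i j → Disjoint (S i) (S j) := by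
  obtain ⟨b, hab, hb, hbsum⟩ := exists_le_sum_eq_two_mul a hpair hsum
  let p : Fin 5 → ZMod k := ![0, b 0, b 0 + b 1, b 0 + b 1 + b 2, b 0 + b 1 + b 2 + b 3]
  have hp : ∀ i, p (i + 1) = p i + b i := by
    have h2k : (b 0 + b 1 + b 2 + b 3 + b 4 : ZMod k) = 0 := by
      rw [Fin.sum_univ_five] at hbsum
      exact_mod_cast hbsum ▸ (by simp : ((2 * k : ℕ) : ZMod k) = 0)
    intro i
    fin_cases i <;> simp [p, h2k]
  refine ⟨fun i => ZMod.arc (p i) (b i), fun i => ?_, fun i j hij => ?_⟩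
  · rw [ZMod.card_arc _ (le_of_add_le_left (hb i))]
    exact hab i
  · rcases cycleGraph_adj.1 hij with h | h
    · obtain rfl := (sub_eq_iff_eq_add').1 h
      refine (?_ : Disjoint _ _).symm
      simp only [hp]
      exact ZMod.disjoint_arc_arc_add _ (hb j)
    · obtain rfl := (sub_eq_iff_eq_add').1 h
      simp only [hp]
      exact ZMod.disjoint_arc_arc_add _ (hb i)

lemma three_mul_sum_le_of_triple_le {m : ℕ} (a : Fin 5 → ℕ)
    (h : ∀ i, a (i - 1) + a i + a (i + 1) ≤ m) : 3 * ∑ i, a i ≤ 5 * m := by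
  have h0 : a 4 + a 0 + a 1 ≤ m := h 0
  have h1 : a 0 + a 1 + a 2 ≤ m := h 1
  have h2 : a 1 + a 2 + a 3 ≤ m := h 2
  have h3 : a 2 + a 3 + a 4 ≤ m := h 3
  have h4 : a 3 + a 4 + a 0 ≤ m := h 4
  rw [Fin.sum_univ_five]
  omega

namespace IsCliqueExpC5

variable {V : Type*} [Fintype V] {G : SimpleGraph V} {f : V → Fin 5}

lemma card_add_card_succ_le_cliqueNum (hG : IsCliqueExpC5 G f) (i : Fin 5) :
    #{v | f v = i} + #{v | f v = i + 1} ≤ G.cliqueNum := by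
  have hne : i ≠ i + 1 := by revert i; decide
  rw [← sum_pair (f := fun w => #{v | f v = w}) hne, ← card_filter_mem_eq_sum_card_fiber]
  refine IsClique.card_le_cliqueNum (tc := fun u hu w hw huw => (hG.2 u w).2 ⟨huw, ?_⟩)
  simp only [coe_filter, mem_univ, true_and, mem_insert, mem_singleton, Set.mem_ofPred_eq]
    at hu hw
  rcases hu with hu | hu <;> rcases hw with hw | hw
  · exact .inl (hu.trans hw.symm)
  · exact .inr (cycleGraph_adj.2 (.inr (by simp [hu, hw])))
  · exact .inr (cycleGraph_adj.2 (.inl (by simp [hu, hw])))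
  · exact .inl (hu.trans hw.symm)

lemma ncard_neighborSet_add_one (hG : IsCliqueExpC5 G f) (v : V) :
    (G.neighborSet v).ncard + 1 =
      #{u | f u = f v - 1} + #{u | f u = f v} + #{u | f u = f v + 1} := by
  have hclosed : insert v (G.neighborSet v) =
      ↑({u | f u ∈ ({f v - 1, f v, f v + 1} : Finset (Fin 5))} : Finset V) := by
    ext u
    have hcyc : (cycleGraph 5).Adj (f v) (f u) ↔ f u = f v - 1 ∨ f u = f v + 1 := by
      rw [← mem_neighborSet, cycleGraph_neighborSet]
      rfl
    simp only [Set.mem_insert_iff, mem_neighborSet, hG.2 v u, hcyc, coe_filter, mem_univ,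
      true_and, mem_insert, mem_singleton, Set.mem_ofPred_eq]
    by_cases huv : u = v
    · simp [huv]
    · grind
  have hdistinct : ∀ i : Fin 5,
      i - 1 ∉ ({i, i + 1} : Finset (Fin 5)) ∧ i ∉ ({i + 1} : Finset (Fin 5)) := by
    decide
  rw [← Set.ncard_insert_of_notMem G.notMem_neighborSet_self, hclosed, Set.ncard_coe_finset,
    card_filter_mem_eq_sum_card_fiber, sum_insert (hdistinct _).1, sum_insert (hdistinct _).2,
    sum_singleton, add_assoc]

end IsCliqueExpC5

theorem stmt13 {V : Type*} [Fintype V] (G : SimpleGraph V) (f : V → Fin 5)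
    (hexp : IsCliqueExpC5 G f) (hΔ : maxDeg G = 9) (hω : G.cliqueNum ≤ 8) :
    G.chromaticNumber ≠ 9 := by
  set a : Fin 5 → ℕ := fun i => #{v | f v = i}
  have hpair : ∀ i, a i + a (i + 1) ≤ 8 := fun i =>
    (hexp.card_add_card_succ_le_cliqueNum i).trans hω
  have htriple : ∀ i, a (i - 1) + a i + a (i + 1) ≤ 10 := fun i => by
    obtain ⟨v, rfl⟩ := hexp.1 i
    have hdeg : (G.neighborSet v).ncard ≤ 9 :=
      hΔ ▸ le_sup (f := fun v => (G.neighborSet v).ncard) (mem_univ v)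
    have := hexp.ncard_neighborSet_add_one v
    simp only [a]
    omega
  have hsum : ∑ i, a i ≤ 2 * 8 := by
    have := three_mul_sum_le_of_triple_le a htriple
    omega
  obtain ⟨S, hS, hdisj⟩ := exists_adj_disjoint_zmod_finsets a hpair hsum
  obtain ⟨C⟩ :=
    nonempty_coloring_of_fiber_card_le f (fun u v h => ((hexp.2 u v).1 h).2) S hS hdisj
  have h8 : G.chromaticNumber ≤ 8 := by simpa using C.colorable.chromaticNumber_le
  intro h9
  rw [h9] at h8
  norm_num at h8
end
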